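/- Fix c* > 0 and define, for each transmit SNR ρ > 0, the ipSIC outage probability P(ρ) = ∫₀^∞ e^{−z} · F(√((c*/ρ) · d_sr^α · (β² M N_r Δ₁ + d_k^α (λ_q² + ε ρ Ω_I z)))) dz. Then P(ρ) converges as ρ → ∞ to a strictly positive limit (an error floor), and consequently the diversity order is zero: −lim_{ρ→∞} log P(ρ)/log ρ = 0. -/
import Mathlib


open MeasureTheory ProbabilityTheory Topology Filter

/-- Lower incomplete gamma function `γ(s, x) = ∫₀ˣ t^{s-1} e^{-t} dt`. -/
noncomputable def lowerGamma (s x : ℝ) : ℝ := ∫ t in (0:ℝ)..x, t ^ (s - 1) * Real.exp (-t)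

/-- `μ₀ = ((M+1)π² − 16)/(16 − π²)`. -/
noncomputable def mu0 (M : ℕ) : ℝ := (((M : ℝ) + 1) * Real.pi ^ 2 - 16) / (16 - Real.pi ^ 2)

/-- `φ₀ = (16 − π²)/(4π)`. -/
noncomputable def phi0 : ℝ := (16 - Real.pi ^ 2) / (4 * Real.pi)

/-- The CDF of the Gamma distribution with shape `μ₀+1` and scale `φ₀`:
`F(x) = γ(μ₀+1, x/φ₀)/Γ(μ₀+1)`. -/
noncomputable def F (M : ℕ) (x : ℝ) : ℝ :=
  lowerGamma (mu0 M + 1) (x / phi0) / Real.Gamma (mu0 M + 1)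

/-- The ipSIC outage probability of the quantized ARIS-NOMA system as a function of
the transmit SNR `ρ`. -/
noncomputable def Pout (M : ℕ) (c lamq beta Nr Δ1 alpha dsr dk eps ΩI rho : ℝ) : ℝ :=
  ∫ z in Set.Ioi (0 : ℝ), Real.exp (-z) *
    F M (Real.sqrt ((c / rho) * (dsr ^ alpha *
      (beta ^ 2 * (M : ℝ) * Nr * Δ1 + dk ^ alpha * (lamq ^ 2 + eps * rho * ΩI * z)))))

section Aux

lemma pi_sq_lt_16' : Real.pi ^ 2 < 16 := by
  nlinarith [Real.pi_lt_d2, Real.pi_pos]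

lemma phi0_pos' : 0 < phi0 := by
  unfold phi0
  have h1 : (0:ℝ) < 16 - Real.pi ^ 2 := by linarith [pi_sq_lt_16']
  have h2 : (0:ℝ) < 4 * Real.pi := by positivity
  exact div_pos h1 h2

lemma shape_pos' (M : ℕ) (hM : 0 < M) : 0 < mu0 M + 1 := by
  have h16 : (0:ℝ) < 16 - Real.pi ^ 2 := by linarith [pi_sq_lt_16']
  have heq : mu0 M + 1 = (M : ℝ) * Real.pi ^ 2 / (16 - Real.pi ^ 2) := by
    unfold mu0; field_simp; ring
  rw [heq]
  have hM' : (0:ℝ) < M := by exact_mod_cast hM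
  positivity

lemma intInt' {s : ℝ} (hs : 0 < s) (a b : ℝ) :
    IntervalIntegrable (fun t : ℝ => t ^ (s - 1) * Real.exp (-t)) volume a b :=
  (intervalIntegral.intervalIntegrable_rpow' (by linarith)).mul_continuousOn
    (Real.continuous_exp.comp continuous_neg).continuousOn

lemma cont_lowerGamma' {s : ℝ} (hs : 0 < s) : Continuous (lowerGamma s) :=
  intervalIntegral.continuous_primitive (intInt' hs) 0

lemma lowerGamma_eq' {s : ℝ} (hs : 0 < s) {y : ℝ} (hy : 0 ≤ y) :
    lowerGamma s y = ∫ t in Set.Ioc 0 y, Real.exp (-t) * t ^ (s - 1) := by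
  rw [lowerGamma, intervalIntegral.integral_of_le hy]
  exact setIntegral_congr_fun measurableSet_Ioc fun t _ => mul_comm _ _

lemma lowerGamma_nonneg' {s : ℝ} (hs : 0 < s) {y : ℝ} (hy : 0 ≤ y) : 0 ≤ lowerGamma s y := by
  rw [lowerGamma_eq' hs hy]
  refine setIntegral_nonneg measurableSet_Ioc fun t ht => ?_
  exact mul_nonneg (Real.exp_nonneg _) (Real.rpow_nonneg ht.1.le _)

lemma lowerGamma_le_Gamma' {s : ℝ} (hs : 0 < s) {y : ℝ} (hy : 0 ≤ y) :
    lowerGamma s y ≤ Real.Gamma s := by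
  rw [lowerGamma_eq' hs hy, Real.Gamma_eq_integral hs]
  refine setIntegral_mono_set (Real.GammaIntegral_convergent hs) ?_
    (HasSubset.Subset.eventuallyLE Set.Ioc_subset_Ioi_self)
  refine (ae_restrict_iff' measurableSet_Ioi).2 (ae_of_all _ fun t ht => ?_)
  exact mul_nonneg (Real.exp_nonneg _) (Real.rpow_nonneg (le_of_lt ht) _)

lemma lowerGamma_pos' {s : ℝ} (hs : 0 < s) {y : ℝ} (hy : 0 < y) : 0 < lowerGamma s y := by
  refine intervalIntegral.intervalIntegral_pos_of_pos_on (intInt' hs 0 y) (fun t ht => ?_) hy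
  exact mul_pos (Real.rpow_pos_of_pos ht.1 _) (Real.exp_pos _)

lemma F_continuous' (M : ℕ) (hM : 0 < M) : Continuous (F M) := by
  have hs := shape_pos' M hM
  unfold F
  exact ((cont_lowerGamma' hs).comp (continuous_id.div_const phi0)).div_const _

lemma F_mem' (M : ℕ) (hM : 0 < M) {x : ℝ} (hx : 0 ≤ x) : 0 ≤ F M x ∧ F M x ≤ 1 := by
  have hs := shape_pos' M hM
  have hG := Real.Gamma_pos_of_pos hs
  have hy : 0 ≤ x / phi0 := div_nonneg hx phi0_pos'.le
  unfold F
  exact ⟨div_nonneg (lowerGamma_nonneg' hs hy) hG.le,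
    (div_le_one hG).2 (lowerGamma_le_Gamma' hs hy)⟩

lemma F_pos' (M : ℕ) (hM : 0 < M) {x : ℝ} (hx : 0 < x) : 0 < F M x := by
  have hs := shape_pos' M hM
  unfold F
  exact div_pos (lowerGamma_pos' hs (div_pos hx phi0_pos')) (Real.Gamma_pos_of_pos hs)

end Aux

/-- **Error floor and zero diversity order under ipSIC**: the ipSIC outage probability
converges to a strictly positive limit as `ρ → ∞` (an error floor), and consequently
the diversity order `−lim_{ρ→∞} log P(ρ)/log ρ` is `0`. -/
theorem error_floor_zero_diversity_ipSIC
    (M : ℕ) (hM : 0 < M)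
    (c lamq beta Nr Δ1 alpha dsr dk eps ΩI : ℝ)
    (hc : 0 < c) (hlam0 : 0 < lamq) (hlam1 : lamq ≤ 1) (hbeta : 0 < beta)
    (hNr : 0 < Nr) (hΔ1 : 0 < Δ1) (halpha : 0 < alpha) (hdsr : 0 < dsr) (hdk : 0 < dk)
    (heps0 : 0 < eps) (heps1 : eps ≤ 1) (hΩI : 0 < ΩI) :
    ∃ L : ℝ, 0 < L ∧
      Filter.Tendsto (fun rho : ℝ => Pout M c lamq beta Nr Δ1 alpha dsr dk eps ΩI rho)
        Filter.atTop (𝓝 L) ∧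
      Filter.Tendsto
        (fun rho : ℝ =>
          Real.log (Pout M c lamq beta Nr Δ1 alpha dsr dk eps ΩI rho) / Real.log rho)
        Filter.atTop (𝓝 0) := by
  have hFc : Continuous (F M) := F_continuous' M hM
  set K : ℝ := c * (dsr ^ alpha * (dk ^ alpha * (eps * ΩI))) with hKdef
  have hKpos : 0 < K := by
    have h1 : (0:ℝ) < dsr ^ alpha := Real.rpow_pos_of_pos hdsr _
    have h2 : (0:ℝ) < dk ^ alpha := Real.rpow_pos_of_pos hdk _
    positivity
  set B : ℝ := c * (dsr ^ alpha *
    (beta ^ 2 * (M : ℝ) * Nr * Δ1 + dk ^ alpha * lamq ^ 2)) with hBdef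
  set g : ℝ → ℝ := fun z => Real.exp (-z) * F M (Real.sqrt (K * z)) with hgdef
  set L : ℝ := ∫ z in Set.Ioi (0:ℝ), g z with hLdef
  -- exponential bound integrable
  have hexp : IntegrableOn (fun z : ℝ => Real.exp (-z)) (Set.Ioi (0:ℝ)) := by
    simpa using exp_neg_integrableOn_Ioi 0 one_pos
  -- g is continuous
  have hgc : Continuous g := by
    rw [hgdef]
    exact (Real.continuous_exp.comp continuous_neg).mul
      (hFc.comp (Real.continuous_sqrt.comp (continuous_const.mul continuous_id)))
  -- norm bound for general F values
  have hnorm : ∀ (x z : ℝ), ‖Real.exp (-z) * F M (Real.sqrt x)‖ ≤ Real.exp (-z) := by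
    intro x z
    have h1 := F_mem' M hM (Real.sqrt_nonneg x)
    rw [Real.norm_eq_abs, abs_mul, Real.abs_exp, abs_of_nonneg h1.1]
    exact mul_le_of_le_one_right (Real.exp_pos _).le h1.2
  -- g is integrable on Ioi 0
  have hgi : IntegrableOn g (Set.Ioi (0:ℝ)) := by
    refine Integrable.mono hexp hgc.aestronglyMeasurable (ae_of_all _ fun z => ?_)
    calc ‖g z‖ = ‖Real.exp (-z) * F M (Real.sqrt (K * z))‖ := rfl
      _ ≤ Real.exp (-z) := hnorm _ _
      _ ≤ ‖Real.exp (-z)‖ := by rw [Real.norm_eq_abs]; exact le_abs_self _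
  -- positivity of L
  have hLpos : 0 < L := by
    rw [hLdef, setIntegral_pos_iff_support_of_nonneg_ae
      (ae_of_all _ fun z => mul_nonneg (Real.exp_nonneg _)
        (F_mem' M hM (Real.sqrt_nonneg _)).1) hgi]
    have hsub : Set.Ioi (0:ℝ) ⊆ Function.support g ∩ Set.Ioi 0 := by
      intro z hz
      refine ⟨?_, hz⟩
      have hzpos : (0:ℝ) < z := hz
      have : 0 < g z := mul_pos (Real.exp_pos _)
        (F_pos' M hM (Real.sqrt_pos.2 (mul_pos hKpos hzpos)))
      exact Function.mem_support.2 this.ne'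
    calc (0:ENNReal) < volume (Set.Ioi (0:ℝ)) := by simp [Real.volume_Ioi]
      _ ≤ volume (Function.support g ∩ Set.Ioi 0) := measure_mono hsub
  -- main convergence
  have hP : Filter.Tendsto (fun rho : ℝ => Pout M c lamq beta Nr Δ1 alpha dsr dk eps ΩI rho)
      Filter.atTop (𝓝 L) := by
    rw [hLdef]
    unfold Pout
    refine tendsto_integral_filter_of_dominated_convergence (fun z => Real.exp (-z))
      ?_ ?_ hexp ?_
    · refine Eventually.of_forall fun rho => Continuous.aestronglyMeasurable ?_
      refine (Real.continuous_exp.comp continuous_neg).mul (hFc.comp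
        (Real.continuous_sqrt.comp ?_))
      fun_prop
    · exact Eventually.of_forall fun rho => ae_of_all _ fun z => hnorm _ z
    · refine (ae_restrict_iff' measurableSet_Ioi).2 (ae_of_all _ fun z hz => ?_)
      have hzpos : (0:ℝ) < z := hz
      have he : Filter.Tendsto (fun rho : ℝ => (c / rho) * (dsr ^ alpha *
          (beta ^ 2 * (M : ℝ) * Nr * Δ1 + dk ^ alpha * (lamq ^ 2 + eps * rho * ΩI * z))))
          Filter.atTop (𝓝 (K * z)) := by
        have h1 : Filter.Tendsto (fun rho : ℝ => B / rho + K * z) Filter.atTop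
            (𝓝 (0 + K * z)) :=
          (tendsto_const_nhds.div_atTop tendsto_id).add tendsto_const_nhds
        rw [zero_add] at h1
        refine h1.congr' ?_
        filter_upwards [eventually_gt_atTop (0:ℝ)] with rho hrho
        have hrho' : rho ≠ 0 := ne_of_gt hrho
        rw [hBdef, hKdef]
        field_simp
        ring
      have h2 : Filter.Tendsto (fun rho : ℝ => F M (Real.sqrt ((c / rho) * (dsr ^ alpha *
          (beta ^ 2 * (M : ℝ) * Nr * Δ1 + dk ^ alpha * (lamq ^ 2 + eps * rho * ΩI * z))))))
          Filter.atTop (𝓝 (F M (Real.sqrt (K * z)))) :=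
        ((hFc.comp Real.continuous_sqrt).tendsto (K * z)).comp he
      exact h2.const_mul (Real.exp (-z))
  refine ⟨L, hLpos, hP, ?_⟩
  have hlog : Filter.Tendsto
      (fun rho : ℝ => Real.log (Pout M c lamq beta Nr Δ1 alpha dsr dk eps ΩI rho))
      Filter.atTop (𝓝 (Real.log L)) :=
    ((Real.continuousAt_log hLpos.ne').tendsto).comp hP
  exact hlog.div_atTop Real.tendsto_log_atTop
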